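/- arXiv:2209.08544 — 11 statements merged into one kernel-verified Lean document; each statement's English description precedes it below -/
import Mathlib

section
/- Let W be the supremum over starting points S ∈ P of the infimum, over all evacuation protocols started at S, of the evacuation cost. Then a + (1/2)·√((2·a²·(b − c) − (b − 2c)·(b + c)²)/b) ≤ W ≤ a + (b + c)/2. (This bounds the optimal evacuation cost when the adversary chooses both the starting edge and the starting point on it.) -/
open Set
open scoped ENNReal

noncomputable section

attribute [local instance] Classical.propDecidable

/-- The Euclidean plane. -/
abbrev Plane := EuclideanSpace ℝ (Fin 2)

/-- The perimeter of triangle `ABC`. -/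
def perimeter (A B C : Plane) : Set Plane :=
  segment ℝ B C ∪ segment ℝ C A ∪ segment ℝ A B

/-- `σ, ρ` form an evacuation protocol for triangle `ABC` started at `S`:
both are 1-Lipschitz on `[0,∞)`, start at `S`, and together cover the perimeter. -/
def IsEvacProtocol (A B C S : Plane) (σ ρ : ℝ → Plane) : Prop :=
  LipschitzOnWith 1 σ (Ici 0) ∧ LipschitzOnWith 1 ρ (Ici 0) ∧
    σ 0 = S ∧ ρ 0 = S ∧ perimeter A B C ⊆ σ '' Ici 0 ∪ ρ '' Ici 0

/-- The finding time of exit `T`. -/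
def findTime (σ ρ : ℝ → Plane) (T : Plane) : ℝ :=
  sInf {s : ℝ | 0 ≤ s ∧ (σ s = T ∨ ρ s = T)}

/-- The evacuation time for exit `T`. -/
def evacTime (σ ρ : ℝ → Plane) (T : Plane) : ℝ :=
  if σ (findTime σ ρ T) = T then findTime σ ρ T + dist (ρ (findTime σ ρ T)) T
  else findTime σ ρ T + dist (σ (findTime σ ρ T)) T

/-- The evacuation cost of the protocol `(σ, ρ)`: the supremum in `[0,∞]`
of the evacuation time over all exits on the perimeter. -/
def evacCost (A B C : Plane) (σ ρ : ℝ → Plane) : ℝ≥0∞ :=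
  ⨆ T ∈ perimeter A B C, ENNReal.ofReal (evacTime σ ρ T)

/-!
Lower bound: the first of `B`, `C` to be found is found no earlier than its distance from the
start `S`; if the exit is the other vertex, the robot that found the first one can only get there
after a further time `a = |BC|`. So every protocol from `S` costs at least `min |SB| |SC| + a`.
The adversary starts at `A` or at the point of `CA` equidistant from `B` and `C`, and a polynomial
inequality shows that one of them has `min |SB| |SC|` at least the square-root term.

Upper bound: from any `S` the robots walk around the perimeter (length `L = a + b + c`) in opposite
directions. An exit found at time `t` by one robot is reached by the other by time `L - t`, and is
always within the diameter `a` of it, so every exit is evacuated by time `(L + a) / 2`.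
-/

section Walk

variable {α E : Type*}

def concatWalk (f g : ℝ → α) (d t : ℝ) : α :=
  if t ≤ d then f t else g (t - d)

variable {f g : ℝ → α} {d : ℝ}

lemma concatWalk_of_le {t : ℝ} (h : t ≤ d) : concatWalk f g d t = f t := if_pos h

lemma concatWalk_zero (hd : 0 ≤ d) : concatWalk f g d 0 = f 0 := concatWalk_of_le hd

lemma concatWalk_of_ge (hfg : f d = g 0) {t : ℝ} (h : d ≤ t) : concatWalk f g d t = g (t - d) := by
  rcases h.eq_or_lt with rfl | h
  · rw [concatWalk_of_le le_rfl, sub_self, hfg]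
  · exact if_neg h.not_ge

lemma concatWalk_add (hfg : f d = g 0) {e : ℝ} (he : 0 ≤ e) : concatWalk f g d (d + e) = g e := by
  rw [concatWalk_of_ge hfg (le_add_of_nonneg_right he), add_sub_cancel_left]

lemma concatWalk_image_Icc (hfg : f d = g 0) (hd : 0 ≤ d) {e : ℝ} (he : 0 ≤ e) :
    concatWalk f g d '' Icc 0 (d + e) = f '' Icc 0 d ∪ g '' Icc 0 e := by
  apply Subset.antisymm
  · rintro _ ⟨t, ⟨ht0, hte⟩, rfl⟩
    rcases le_total t d with htd | hdt
    · exact .inl ⟨t, ⟨ht0, htd⟩, (concatWalk_of_le htd).symm⟩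
    · exact .inr ⟨t - d, ⟨by linarith, by linarith⟩, (concatWalk_of_ge hfg hdt).symm⟩
  · rintro _ (⟨t, ⟨ht0, htd⟩, rfl⟩ | ⟨t, ⟨ht0, hte⟩, rfl⟩)
    · exact ⟨t, ⟨ht0, by linarith⟩, concatWalk_of_le htd⟩
    · exact ⟨d + t, ⟨by linarith, by linarith⟩, concatWalk_add hfg ht0⟩

lemma LipschitzWith.concatWalk [PseudoMetricSpace α] {K : NNReal} (hf : LipschitzWith K f)
    (hg : LipschitzWith K g) (hfg : f d = g 0) : LipschitzWith K (_root_.concatWalk f g d) := by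
  have key : ∀ s t, s ≤ t →
      dist (_root_.concatWalk f g d s) (_root_.concatWalk f g d t) ≤ K * (t - s) := by
    intro s t hst
    have hf' := fun x y => (hf.dist_le_mul x y).trans_eq (by rw [Real.dist_eq])
    have hg' := fun x y => (hg.dist_le_mul x y).trans_eq (by rw [Real.dist_eq])
    rcases le_total t d with htd | hdt
    · rw [concatWalk_of_le (hst.trans htd), concatWalk_of_le htd]
      exact (hf' s t).trans_eq (by rw [abs_sub_comm, abs_of_nonneg (by linarith)])
    rcases le_total s d with hsd | hds
    · rw [concatWalk_of_le hsd, concatWalk_of_ge hfg hdt]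
      calc dist (f s) (g (t - d)) ≤ dist (f s) (f d) + dist (g 0) (g (t - d)) := by
            rw [hfg]; exact dist_triangle _ _ _
        _ ≤ K * |s - d| + K * |0 - (t - d)| := add_le_add (hf' _ _) (hg' _ _)
        _ = K * (t - s) := by
            rw [abs_of_nonpos (by linarith), abs_of_nonpos (by linarith)]; ring
    · rw [concatWalk_of_ge hfg hds, concatWalk_of_ge hfg hdt]
      exact (hg' _ _).trans_eq (by rw [abs_of_nonpos (by linarith)]; ring)
  refine LipschitzWith.of_dist_le_mul fun s t => ?_
  rcases le_total s t with hst | hts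
  · exact (key s t hst).trans_eq (by rw [Real.dist_eq, abs_of_nonpos (by linarith)]; ring)
  · rw [dist_comm]
    exact (key t s hts).trans_eq (by rw [Real.dist_eq, abs_of_nonneg (by linarith)])

variable [NormedAddCommGroup E] [NormedSpace ℝ E]

open AffineMap

def segmentWalk (x y : E) (t : ℝ) : E :=
  lineMap x y ((projIcc 0 (dist x y) dist_nonneg t : ℝ) / dist x y)

lemma segmentWalk_of_mem {x y : E} {t : ℝ} (ht : t ∈ Icc 0 (dist x y)) :
    segmentWalk x y t = lineMap x y (t / dist x y) := by
  rw [segmentWalk, projIcc_of_mem _ ht]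

lemma segmentWalk_zero (x y : E) : segmentWalk x y 0 = x := by
  rw [segmentWalk_of_mem ⟨le_rfl, dist_nonneg⟩, zero_div, lineMap_apply_zero]

lemma segmentWalk_dist (x y : E) : segmentWalk x y (dist x y) = y := by
  rw [segmentWalk_of_mem ⟨dist_nonneg, le_rfl⟩]
  rcases eq_or_ne x y with rfl | hxy
  · simp
  · rw [div_self (dist_ne_zero.2 hxy), lineMap_apply_one]

lemma segmentWalk_image_Icc (x y : E) : segmentWalk x y '' Icc 0 (dist x y) = segment ℝ x y := by
  rcases eq_or_ne x y with rfl | hxy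
  · simp [segmentWalk_of_mem]
  have hd : 0 < dist x y := dist_pos.2 hxy
  rw [segment_eq_image_lineMap]
  ext z
  constructor
  · rintro ⟨t, ht, rfl⟩
    exact ⟨t / dist x y, ⟨div_nonneg ht.1 hd.le, (div_le_one hd).2 ht.2⟩,
      (segmentWalk_of_mem ht).symm⟩
  · rintro ⟨θ, ⟨hθ0, hθ1⟩, rfl⟩
    have ht : θ * dist x y ∈ Icc 0 (dist x y) := ⟨by positivity, by nlinarith⟩
    exact ⟨θ * dist x y, ht, by rw [segmentWalk_of_mem ht, mul_div_cancel_right₀ _ hd.ne']⟩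

lemma lipschitzWith_segmentWalk (x y : E) : LipschitzWith 1 (segmentWalk x y) := by
  have hline : LipschitzWith 1 fun s : ℝ => lineMap x y (s / dist x y) := by
    refine LipschitzWith.of_dist_le_mul fun s t => ?_
    rw [dist_lineMap_lineMap, Real.dist_eq, Real.dist_eq, ← sub_div, abs_div,
      abs_of_nonneg dist_nonneg, NNReal.coe_one, one_mul]
    rcases eq_or_ne x y with rfl | hxy
    · simp
    · rw [div_mul_cancel₀ _ (dist_ne_zero.2 hxy)]
  exact (hline.comp ((LipschitzWith.subtype_val _).comp (LipschitzWith.projIcc dist_nonneg))).weaken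
    (by simp)

end Walk

section TriangleTour

variable {E : Type*} [NormedAddCommGroup E] [NormedSpace ℝ E]

def triangleTour (S X Y Z : E) : ℝ → E :=
  concatWalk (segmentWalk S Y)
    (concatWalk (segmentWalk Y Z)
      (concatWalk (segmentWalk Z X) (segmentWalk X S) (dist Z X)) (dist Y Z)) (dist S Y)

variable (S X Y Z : E)

lemma triangleTour_zero : triangleTour S X Y Z 0 = S := by
  rw [triangleTour, concatWalk_zero dist_nonneg, segmentWalk_zero]

lemma triangleTour_junctions :
    segmentWalk S Y (dist S Y) = concatWalk (segmentWalk Y Z)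
      (concatWalk (segmentWalk Z X) (segmentWalk X S) (dist Z X)) (dist Y Z) 0 ∧
    segmentWalk Y Z (dist Y Z) = concatWalk (segmentWalk Z X) (segmentWalk X S) (dist Z X) 0 ∧
    segmentWalk Z X (dist Z X) = segmentWalk X S 0 := by
  simp only [concatWalk_zero dist_nonneg, segmentWalk_zero, segmentWalk_dist, and_self]

lemma lipschitzWith_triangleTour : LipschitzWith 1 (triangleTour S X Y Z) := by
  obtain ⟨h₁, h₂, h₃⟩ := triangleTour_junctions S X Y Z
  have hseg := lipschitzWith_segmentWalk (E := E)
  exact (hseg _ _).concatWalk ((hseg _ _).concatWalk ((hseg _ _).concatWalk (hseg _ _) h₃) h₂) h₁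

lemma triangleTour_image_Icc :
    triangleTour S X Y Z '' Icc 0 (dist S Y + (dist Y Z + (dist Z X + dist X S))) =
      segment ℝ S Y ∪ (segment ℝ Y Z ∪ (segment ℝ Z X ∪ segment ℝ X S)) := by
  obtain ⟨h₁, h₂, h₃⟩ := triangleTour_junctions S X Y Z
  rw [triangleTour, concatWalk_image_Icc h₁ dist_nonneg (by positivity),
    concatWalk_image_Icc h₂ dist_nonneg (by positivity),
    concatWalk_image_Icc h₃ dist_nonneg dist_nonneg, segmentWalk_image_Icc, segmentWalk_image_Icc,
    segmentWalk_image_Icc, segmentWalk_image_Icc]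

lemma triangleTour_length :
    triangleTour S X Y Z (dist S Y + (dist Y Z + (dist Z X + dist X S))) = S := by
  obtain ⟨h₁, h₂, h₃⟩ := triangleTour_junctions S X Y Z
  rw [triangleTour, concatWalk_add h₁ (by positivity), concatWalk_add h₂ (by positivity),
    concatWalk_add h₃ dist_nonneg, segmentWalk_dist]

end TriangleTour

section Geometry

variable {E : Type*} [NormedAddCommGroup E] [NormedSpace ℝ E]

lemma segment_union_segment_of_mem {x y z : E} (hz : z ∈ segment ℝ x y) :
    segment ℝ x z ∪ segment ℝ z y = segment ℝ x y := by
  refine Subset.antisymm (union_subset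
    ((convex_segment x y).segment_subset (left_mem_segment ℝ x y) hz)
    ((convex_segment x y).segment_subset hz (right_mem_segment ℝ x y))) fun w hw => ?_
  rcases eq_or_ne y x with rfl | hyx
  · rw [segment_same, mem_singleton_iff] at hw
    exact .inl (hw ▸ left_mem_segment ℝ y z)
  rw [mem_segment_iff_wbtw] at hz hw
  have hray : SameRay ℝ (w -ᵥ x) (z -ᵥ x) :=
    hw.sameRay_vsub_left.trans hz.sameRay_vsub_left.symm fun h =>
      (hyx (vsub_eq_zero_iff_eq.1 h)).elim
  rcases wbtw_total_of_sameRay_vsub_left hray with hxwz | hxzw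
  · exact .inl (mem_segment_iff_wbtw.2 hxwz)
  · exact .inr (mem_segment_iff_wbtw.2 (hw.trans_left_right hxzw))

open AffineMap in
lemma dist_lineMap_eq_dist_lineMap_left {E : Type*} [NormedAddCommGroup E] [InnerProductSpace ℝ E]
    {A B C : E} {τ : ℝ} (hτ : τ * (dist B C ^ 2 + dist C A ^ 2 - dist A B ^ 2) = dist B C ^ 2) :
    dist (lineMap C A τ) B = dist (lineMap C A τ) C := by
  have hcos : ‖A - B‖ ^ 2 = ‖A - C‖ ^ 2 + 2 * inner ℝ (A - C) (C - B) + ‖C - B‖ ^ 2 := by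
    rw [← norm_add_sq_real, sub_add_sub_cancel]
  rw [dist_comm B C, dist_comm C A] at hτ
  rw [← sq_eq_sq₀ dist_nonneg dist_nonneg]
  simp only [dist_eq_norm] at hτ ⊢
  rw [lineMap_apply_module', add_sub_cancel_right, add_sub_assoc, norm_add_sq_real,
    real_inner_smul_left, norm_smul, mul_pow, Real.norm_eq_abs, sq_abs]
  linear_combination -hτ - τ * hcos

end Geometry

lemma LipschitzOnWith.dist_le_sub_of_le {α : Type*} [PseudoMetricSpace α] {f : ℝ → α}
    (hf : LipschitzOnWith 1 f (Ici 0)) {s t : ℝ} (hs : 0 ≤ s) (hst : s ≤ t) :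
    dist (f s) (f t) ≤ t - s :=
  (hf.dist_le_mul s hs t (hs.trans hst)).trans_eq <| by
    rw [NNReal.coe_one, one_mul, Real.dist_eq, abs_sub_comm, abs_of_nonneg (sub_nonneg.2 hst)]

section Evacuation

lemma perimeter_rotate (A B C : Plane) : perimeter A B C = perimeter B C A := by
  simp only [perimeter, union_assoc, union_comm (segment ℝ B C)]

lemma dist_le_of_mem_perimeter {A B C p q : Plane} {D : ℝ} (hBC : dist B C ≤ D)
    (hCA : dist C A ≤ D) (hAB : dist A B ≤ D) (hp : p ∈ perimeter A B C)
    (hq : q ∈ perimeter A B C) : dist p q ≤ D := by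
  have hsub : perimeter A B C ⊆ convexHull ℝ {A, B, C} := by
    refine union_subset (union_subset ?_ ?_) ?_ <;>
      exact segment_subset_convexHull (by simp) (by simp)
  obtain ⟨x, hx, y, hy, hxy⟩ := convexHull_exists_dist_ge2 (hsub hp) (hsub hq)
  refine hxy.trans ?_
  simp only [mem_insert_iff, mem_singleton_iff] at hx hy
  have hD : 0 ≤ D := dist_nonneg.trans hAB
  rcases hx with rfl | rfl | rfl <;> rcases hy with rfl | rfl | rfl <;>
    first | (rw [dist_self]; exact hD) | assumption | (rw [dist_comm]; assumption)

def optimalEvacCost (A B C S : Plane) : ℝ≥0∞ :=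
  ⨅ (σ : ℝ → Plane) (ρ : ℝ → Plane) (_ : IsEvacProtocol A B C S σ ρ), evacCost A B C σ ρ

lemma optimalEvacCost_rotate (A B C : Plane) : optimalEvacCost A B C = optimalEvacCost B C A := by
  funext S
  simp only [optimalEvacCost, IsEvacProtocol, evacCost, perimeter_rotate A B C]

variable {A B C S T T₁ T₂ : Plane} {σ ρ : ℝ → Plane}

lemma findTime_nonneg (σ ρ : ℝ → Plane) (T : Plane) : 0 ≤ findTime σ ρ T :=
  Real.sInf_nonneg fun _ hs => hs.1

lemma findTime_le {u : ℝ} (hu : 0 ≤ u) (h : σ u = T ∨ ρ u = T) : findTime σ ρ T ≤ u :=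
  csInf_le ⟨0, fun _ hs => hs.1⟩ ⟨hu, h⟩

lemma found_at_findTime (hσ : ContinuousOn σ (Ici 0)) (hρ : ContinuousOn ρ (Ici 0)) {u : ℝ}
    (hu : 0 ≤ u) (h : σ u = T ∨ ρ u = T) :
    σ (findTime σ ρ T) = T ∨ ρ (findTime σ ρ T) = T := by
  have hclosed : IsClosed {s : ℝ | 0 ≤ s ∧ (σ s = T ∨ ρ s = T)} := by
    simp only [and_or_left, ofPred_or]
    exact (hσ.preimage_isClosed_of_isClosed isClosed_Ici isClosed_singleton).union
      (hρ.preimage_isClosed_of_isClosed isClosed_Ici isClosed_singleton)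
  exact (hclosed.csInf_mem ⟨u, hu, h⟩ ⟨0, fun _ hs => hs.1⟩).2

lemma evacTime_eq_add_max (h : σ (findTime σ ρ T) = T ∨ ρ (findTime σ ρ T) = T) :
    evacTime σ ρ T = findTime σ ρ T +
      max (dist (σ (findTime σ ρ T)) T) (dist (ρ (findTime σ ρ T)) T) := by
  unfold evacTime
  split_ifs with hσ
  · rw [hσ, dist_self, max_eq_right dist_nonneg]
  · rw [h.resolve_left hσ, dist_self, max_eq_left dist_nonneg]

namespace IsEvacProtocol

lemma found (hp : IsEvacProtocol A B C S σ ρ) (hT : T ∈ perimeter A B C) :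
    σ (findTime σ ρ T) = T ∨ ρ (findTime σ ρ T) = T := by
  obtain ⟨hσ, hρ, -, -, hcov⟩ := hp
  rcases hcov hT with ⟨u, hu, hσu⟩ | ⟨u, hu, hρu⟩
  · exact found_at_findTime hσ.continuousOn hρ.continuousOn hu (.inl hσu)
  · exact found_at_findTime hσ.continuousOn hρ.continuousOn hu (.inr hρu)

lemma dist_le_findTime (hp : IsEvacProtocol A B C S σ ρ) (hT : T ∈ perimeter A B C) :
    dist S T ≤ findTime σ ρ T := by
  have finder : ∀ f : ℝ → Plane, LipschitzOnWith 1 f (Ici 0) → f 0 = S →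
      f (findTime σ ρ T) = T → dist S T ≤ findTime σ ρ T := fun f hf hf0 hfT => by
    simpa only [hf0, hfT, sub_zero] using hf.dist_le_sub_of_le le_rfl (findTime_nonneg σ ρ T)
  rcases hp.found hT with h | h
  · exact finder σ hp.1 hp.2.2.1 h
  · exact finder ρ hp.2.1 hp.2.2.2.1 h

lemma findTime_add_dist_le_evacTime (hp : IsEvacProtocol A B C S σ ρ)
    (h₁ : T₁ ∈ perimeter A B C) (h₂ : T₂ ∈ perimeter A B C)
    (hle : findTime σ ρ T₁ ≤ findTime σ ρ T₂) :
    findTime σ ρ T₁ + dist T₁ T₂ ≤ evacTime σ ρ T₂ := by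
  rw [evacTime_eq_add_max (hp.found h₂)]
  set t₁ := findTime σ ρ T₁
  set t₂ := findTime σ ρ T₂
  have finder : ∀ f : ℝ → Plane, LipschitzOnWith 1 f (Ici 0) → f t₁ = T₁ →
      dist T₁ T₂ ≤ t₂ - t₁ + dist (f t₂) T₂ := fun f hf hfT => calc
    dist T₁ T₂ = dist (f t₁) T₂ := by rw [hfT]
    _ ≤ dist (f t₁) (f t₂) + dist (f t₂) T₂ := dist_triangle _ _ _
    _ ≤ t₂ - t₁ + dist (f t₂) T₂ := by grw [hf.dist_le_sub_of_le (findTime_nonneg σ ρ T₁) hle]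
  rcases hp.found h₁ with h | h
  · linarith [finder σ hp.1 h, le_max_left (dist (σ t₂) T₂) (dist (ρ t₂) T₂)]
  · linarith [finder ρ hp.2.1 h, le_max_right (dist (σ t₂) T₂) (dist (ρ t₂) T₂)]

lemma le_evacCost (hp : IsEvacProtocol A B C S σ ρ) (h₁ : T₁ ∈ perimeter A B C)
    (h₂ : T₂ ∈ perimeter A B C) :
    ENNReal.ofReal (min (dist S T₁) (dist S T₂) + dist T₁ T₂) ≤ evacCost A B C σ ρ := by
  wlog hle : findTime σ ρ T₁ ≤ findTime σ ρ T₂ generalizing T₁ T₂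
  · rw [min_comm, dist_comm T₁]
    exact this h₂ h₁ (not_le.1 hle).le
  refine le_iSup₂_of_le T₂ h₂ (ENNReal.ofReal_le_ofReal ?_)
  linarith [min_le_left (dist S T₁) (dist S T₂), hp.dist_le_findTime h₁,
    hp.findTime_add_dist_le_evacTime h₁ h₂ hle]

end IsEvacProtocol

lemma le_optimalEvacCost (h₁ : T₁ ∈ perimeter A B C) (h₂ : T₂ ∈ perimeter A B C) :
    ENNReal.ofReal (min (dist S T₁) (dist S T₂) + dist T₁ T₂) ≤ optimalEvacCost A B C S :=
  le_iInf fun _ => le_iInf fun _ => le_iInf fun hp => hp.le_evacCost h₁ h₂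

end Evacuation

section UpperBound

lemma LipschitzWith.comp_sub_left {α : Type*} [PseudoMetricSpace α] {K : NNReal} {f : ℝ → α}
    (hf : LipschitzWith K f) (L : ℝ) : LipschitzWith K fun t => f (L - t) :=
  LipschitzWith.of_dist_le_mul fun s t => by
    simpa only [dist_sub_left] using hf.dist_le_mul (L - s) (L - t)

variable {A B C S : Plane} {σ : ℝ → Plane} {L D : ℝ}

lemma isEvacProtocol_reverse (hσ : LipschitzWith 1 σ) (h0 : σ 0 = S) (hL : σ L = S)
    (hcov : σ '' Icc 0 L = perimeter A B C) :
    IsEvacProtocol A B C S σ (fun t => σ (L - t)) := by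
  refine ⟨hσ.lipschitzOnWith, (hσ.comp_sub_left L).lipschitzOnWith, h0, by simpa using hL, ?_⟩
  rw [← hcov]
  exact (image_mono Icc_subset_Ici_self).trans subset_union_left

lemma evacCost_reverse_le (hσ : LipschitzWith 1 σ) (hcov : σ '' Icc 0 L = perimeter A B C)
    (hD : ∀ p ∈ perimeter A B C, ∀ q ∈ perimeter A B C, dist p q ≤ D) :
    evacCost A B C σ (fun t => σ (L - t)) ≤ ENNReal.ofReal ((L + D) / 2) := by
  set ρ : ℝ → Plane := fun t => σ (L - t)
  have hρ : LipschitzWith 1 ρ := hσ.comp_sub_left L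
  refine iSup₂_le fun T hT => ENNReal.ofReal_le_ofReal ?_
  obtain ⟨u, ⟨hu0, huL⟩, hσu⟩ : T ∈ σ '' Icc 0 L := hcov ▸ hT
  have hρu : ρ (L - u) = T := by simp only [ρ, sub_sub_cancel, hσu]
  have hfound := found_at_findTime hσ.continuous.continuousOn hρ.continuous.continuousOn hu0
    (.inl hσu)
  rw [evacTime_eq_add_max hfound]
  set t := findTime σ ρ T
  have ht0 : 0 ≤ t := findTime_nonneg σ ρ T
  have htu : t ≤ u := findTime_le hu0 (.inl hσu)
  have htv : t ≤ L - u := findTime_le (by linarith) (.inr hρu)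
  have hmem : ∀ s ∈ Icc 0 L, σ s ∈ perimeter A B C := fun s hs => hcov ▸ mem_image_of_mem σ hs
  have hσD := hD _ (hmem t ⟨ht0, by linarith⟩) T hT
  have hρD := hD _ (hmem (L - t) ⟨by linarith, by linarith⟩) T hT
  have hσt := hσ.lipschitzOnWith.dist_le_sub_of_le ht0 htu
  have hρt := hρ.lipschitzOnWith.dist_le_sub_of_le ht0 htv
  rw [hσu] at hσt
  rw [hρu] at hρt
  rw [← max_add_add_left]
  exact max_le (by linarith) (by linarith)

lemma optimalEvacCost_le_of_closed_tour (hσ : LipschitzWith 1 σ) (h0 : σ 0 = S) (hL : σ L = S)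
    (hcov : σ '' Icc 0 L = perimeter A B C)
    (hD : ∀ p ∈ perimeter A B C, ∀ q ∈ perimeter A B C, dist p q ≤ D) :
    optimalEvacCost A B C S ≤ ENNReal.ofReal ((L + D) / 2) :=
  (iInf₂_le_of_le σ _ (iInf_le _ (isEvacProtocol_reverse hσ h0 hL hcov))).trans
    (evacCost_reverse_le hσ hcov hD)

lemma optimalEvacCost_le_of_mem_segment {X Y Z : Plane} (hS : S ∈ segment ℝ X Y)
    (hD : ∀ p ∈ perimeter Z X Y, ∀ q ∈ perimeter Z X Y, dist p q ≤ D) :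
    optimalEvacCost Z X Y S ≤ ENNReal.ofReal ((dist X Y + dist Y Z + dist Z X + D) / 2) := by
  have hL : dist S Y + (dist Y Z + (dist Z X + dist X S)) = dist X Y + dist Y Z + dist Z X := by
    rw [← (mem_segment_iff_wbtw.1 hS).dist_add_dist]; ring
  have hcov : triangleTour S X Y Z '' Icc 0 (dist S Y + (dist Y Z + (dist Z X + dist X S))) =
      perimeter Z X Y := by
    rw [triangleTour_image_Icc, perimeter, ← segment_union_segment_of_mem hS]
    ac_rfl
  rw [← hL]
  exact optimalEvacCost_le_of_closed_tour (lipschitzWith_triangleTour S X Y Z)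
    (triangleTour_zero S X Y Z) (triangleTour_length S X Y Z) hcov hD

lemma optimalEvacCost_le (hS : S ∈ perimeter A B C)
    (hD : ∀ p ∈ perimeter A B C, ∀ q ∈ perimeter A B C, dist p q ≤ D) :
    optimalEvacCost A B C S ≤ ENNReal.ofReal ((dist A B + dist B C + dist C A + D) / 2) := by
  rcases hS with (hS | hS) | hS
  · exact (optimalEvacCost_le_of_mem_segment hS hD).trans_eq (by ring_nf)
  · rw [perimeter_rotate] at hD
    rw [optimalEvacCost_rotate]
    exact (optimalEvacCost_le_of_mem_segment hS hD).trans_eq (by ring_nf)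
  · rw [perimeter_rotate, perimeter_rotate] at hD
    rw [optimalEvacCost_rotate, optimalEvacCost_rotate]
    exact (optimalEvacCost_le_of_mem_segment hS hD).trans_eq (by ring_nf)

end UpperBound

section LowerBound

lemma radicand_le_of_vertex {a b c : ℝ} (hb : 0 ≤ b) (h : a ^ 2 * b ≤ c * (a ^ 2 + b ^ 2 - c ^ 2)) :
    2 * a ^ 2 * (b - c) - (b - 2 * c) * (b + c) ^ 2 ≤ (2 * c) ^ 2 * b := by
  linear_combination 2 * h + mul_nonneg hb (sq_nonneg (b - c))

lemma equidistant_certificate_nonneg {c u w s : ℝ} (hc : 0 ≤ c) (hu : 0 ≤ u) (hw : 0 ≤ w)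
    (hs : 0 ≤ s) :
    0 ≤ 4 * u * c ^ 5 + 16 * u ^ 2 * c ^ 4 + 25 * u ^ 3 * c ^ 3 + 19 * u ^ 4 * c ^ 2 + 6 * u ^ 5 * c
      + w * (8 * c ^ 4 + 20 * u * c ^ 3 + 15 * u ^ 2 * c ^ 2 + 2 * u ^ 3 * c)
      + s * (2 * w ^ 2 + w * (u * c + u ^ 2) + u ^ 4) := by
  positivity

lemma radicand_mul_le_of_equidistant {a b c : ℝ} (hc : 0 ≤ c) (hbc : c ≤ b)
    (hno : a ^ 2 ≤ b ^ 2 + c ^ 2) (h : c * (a ^ 2 + b ^ 2 - c ^ 2) ≤ a ^ 2 * b) :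
    (2 * a ^ 2 * (b - c) - (b - 2 * c) * (b + c) ^ 2) * (a ^ 2 + b ^ 2 - c ^ 2) ^ 2
      ≤ 4 * a ^ 4 * b ^ 3 := by
  rcases hbc.eq_or_lt with rfl | hlt
  · exact le_of_eq (by ring)
  have hu : 0 < b - c := sub_pos.2 hlt
  have hw : 0 ≤ a ^ 2 - c * (b + c) := nonneg_of_mul_nonneg_right (by linear_combination h) hu
  -- with `u = b - c`, `w = a² - c(b + c)` and `s = b² + c² - a²`, the difference of the two sides
  -- is `u` times the polynomial of `equidistant_certificate_nonneg`
  linear_combination mul_nonneg hu.le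
    (equidistant_certificate_nonneg hc hu.le hw (sub_nonneg.2 hno))

open AffineMap in
lemma exists_mem_perimeter_le_min_dist {A B C : Plane} {a b c : ℝ} (ha : a = dist B C)
    (hb : b = dist C A) (hc : c = dist A B) (hbc : c ≤ b) (hno : a ^ 2 ≤ b ^ 2 + c ^ 2) :
    ∃ S ∈ perimeter A B C, (1 / 2) * √((2 * a ^ 2 * (b - c) - (b - 2 * c) * (b + c) ^ 2) / b)
      ≤ min (dist S B) (dist S C) := by
  have hc0 : 0 ≤ c := hc ▸ dist_nonneg
  have hb0 : 0 ≤ b := hc0.trans hbc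
  -- the point of `CA` equidistant from `B` and `C` lies at distance `a²b / (a² + b² - c²)` from
  -- both, so the case split picks whichever of it and `A` is farther from the nearer of `B`, `C`
  rcases le_or_gt (a ^ 2 * b) (c * (a ^ 2 + b ^ 2 - c ^ 2)) with hvertex | hequi
  · refine ⟨A, .inr (left_mem_segment ℝ A B), ?_⟩
    rw [dist_comm A C, ← hc, ← hb, min_eq_left hbc]
    have := Real.sqrt_le_iff.2 ⟨by positivity,
      div_le_of_le_mul₀ hb0 (sq_nonneg _) (radicand_le_of_vertex hb0 hvertex)⟩
    linarith
  set q := a ^ 2 + b ^ 2 - c ^ 2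
  have hq : 0 < q := by
    have : 0 < a ^ 2 * b := (mul_nonneg hc0 (by nlinarith)).trans_lt hequi
    nlinarith [pos_of_mul_pos_left this hb0]
  set τ := a ^ 2 / q
  have hτq : τ * q = a ^ 2 := div_mul_cancel₀ _ hq.ne'
  have hτ0 : 0 ≤ τ := by positivity
  have hτ1 : τ ≤ 1 := (div_le_one hq).2 (by nlinarith)
  refine ⟨lineMap C A τ, .inl (.inr ?_), ?_⟩
  · rw [segment_eq_image_lineMap]
    exact mem_image_of_mem _ ⟨hτ0, hτ1⟩
  have hSC : dist (lineMap C A τ) C = τ * b := by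
    rw [dist_lineMap_left, Real.norm_eq_abs, abs_of_nonneg hτ0, hb]
  rw [dist_lineMap_eq_dist_lineMap_left (by rw [← ha, ← hb, ← hc]; exact hτq), min_self, hSC]
  have hmul : (2 * a ^ 2 * (b - c) - (b - 2 * c) * (b + c) ^ 2) * q ^ 2
      ≤ (2 * τ * b) ^ 2 * b * q ^ 2 :=
    (radicand_mul_le_of_equidistant hc0 hbc hno hequi.le).trans_eq
      (by linear_combination (-4 * b ^ 3 * (a ^ 2 + τ * q)) * hτq)
  have := Real.sqrt_le_iff.2 ⟨by positivity,
    div_le_of_le_mul₀ hb0 (sq_nonneg _) (le_of_mul_le_mul_right hmul (by positivity))⟩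
  linarith

end LowerBound

theorem stmt3_general (A B C : Plane)
    (a b c : ℝ) (ha : a = dist B C) (hb : b = dist C A) (hc : c = dist A B)
    (hab : b ≤ a) (hbc : c ≤ b) (hnonobtuse : a ^ 2 ≤ b ^ 2 + c ^ 2)
    (W : ℝ≥0∞)
    (hW : W = ⨆ (S : Plane) (_ : S ∈ perimeter A B C),
        ⨅ (σ : ℝ → Plane) (ρ : ℝ → Plane) (_ : IsEvacProtocol A B C S σ ρ),
          evacCost A B C σ ρ) :
    ENNReal.ofReal
        (a + (1/2) * Real.sqrt ((2 * a ^ 2 * (b - c) - (b - 2 * c) * (b + c) ^ 2) / b)) ≤ W ∧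
      W ≤ ENNReal.ofReal (a + (b + c) / 2) := by
  change W = ⨆ (S : Plane) (_ : S ∈ perimeter A B C), optimalEvacCost A B C S at hW
  subst hW
  constructor
  · obtain ⟨S, hS, hmin⟩ := exists_mem_perimeter_le_min_dist ha hb hc hbc hnonobtuse
    calc ENNReal.ofReal (a + _)
        ≤ ENNReal.ofReal (min (dist S B) (dist S C) + dist B C) := by
          rw [← ha]; exact ENNReal.ofReal_le_ofReal (by linarith)
      _ ≤ optimalEvacCost A B C S := le_optimalEvacCost (.inl (.inl (left_mem_segment ℝ B C)))
          (.inl (.inl (right_mem_segment ℝ B C)))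
      _ ≤ _ := le_iSup₂ (f := fun S _ => optimalEvacCost A B C S) S hS
  · have hdiam : ∀ p ∈ perimeter A B C, ∀ q ∈ perimeter A B C, dist p q ≤ a :=
      fun p hp q hq => dist_le_of_mem_perimeter ha.ge (hb ▸ hab) (hc ▸ hbc.trans hab) hp hq
    refine iSup₂_le fun S hS => (optimalEvacCost_le hS hdiam).trans_eq ?_
    rw [← ha, ← hb, ← hc]
    ring_nf

/-- Bounds on the optimal evacuation cost when the adversary chooses both the starting
edge and the starting point: `W` is the supremum over starting points `S` on the
perimeter of the best evacuation cost achievable from `S`. -/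
theorem stmt3 (A B C : Plane) (hind : AffineIndependent ℝ ![A, B, C])
    (a b c : ℝ) (ha : a = dist B C) (hb : b = dist C A) (hc : c = dist A B)
    (hab : b ≤ a) (hbc : c ≤ b) (hnonobtuse : a ^ 2 ≤ b ^ 2 + c ^ 2)
    (W : ℝ≥0∞)
    (hW : W = ⨆ (S : Plane) (_ : S ∈ perimeter A B C),
        ⨅ (σ : ℝ → Plane) (ρ : ℝ → Plane) (_ : IsEvacProtocol A B C S σ ρ),
          evacCost A B C σ ρ) :
    ENNReal.ofReal
        (a + (1/2) * Real.sqrt ((2 * a ^ 2 * (b - c) - (b - 2 * c) * (b + c) ^ 2) / b)) ≤ W ∧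
      W ≤ ENNReal.ofReal (a + (b + c) / 2) :=
  stmt3_general A B C a b c ha hb hc hab hbc hnonobtuse W hW
end
end

section
/- For every real A with π/3 < A ≤ π/2, the two real numbers y₁ = (1/2)·(1 − √(1 − 2·cos A)/tan(A/2)) and y₂ = (1/2)·(1 + √(1 − 2·cos A)/tan(A/2)) are exactly the roots of the quadratic equation 2·(1 − cos A)·y² − 2·(1 − cos A)·y + (cos A)² = 0, and they satisfy y₁ < sin(A/2) < y₂ ≤ 1. In particular, exactly one of the two roots is at least sin(A/2), and the largest root does not exceed 1. -/
open Real

/-! With `s = sin (A/2)` one has `cos A = 1 - 2 s²` and `1 - 2 cos A = 4 s² - 1`, and the roots are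
`(1 ∓ u)/2` with `u = √(1 - 2 cos A) / tan (A/2)`, where `(u s)² = (4 s² - 1)(1 - s²)`. Vieta's formulas
then reduce to the identity `s² - (4 s² - 1)(1 - s²) = (1 - 2 s²)²`, and the three inequalities amount to
`1 - 2 s < u`, `2 s - 1 < u` and `u ≤ 1`, which are polynomial inequalities in `s ∈ (1/2, 1/√2]`. -/

theorem quadratic_eq_zero_iff_eq_or_eq {R : Type*} [CommRing R] [IsDomain R] {a b c y₁ y₂ : R}
    (ha : a ≠ 0) (hsum : a * (y₁ + y₂) = -b) (hprod : a * (y₁ * y₂) = c) (y : R) :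
    a * y ^ 2 + b * y + c = 0 ↔ y = y₁ ∨ y = y₂ := by
  have hfactor : a * y ^ 2 + b * y + c = a * ((y - y₁) * (y - y₂)) := by
    linear_combination y * hsum - hprod
  rw [hfactor, mul_eq_zero, mul_eq_zero, sub_eq_zero, sub_eq_zero]
  exact or_iff_right ha

theorem div_tan_mul_sin (x θ : ℝ) (h : sin θ ≠ 0) : x / tan θ * sin θ = x * cos θ := by
  rw [tan_eq_sin_div_cos, div_div_eq_mul_div, div_mul_cancel₀ _ h]

theorem le_one_of_sq_mul_eq {s u : ℝ} (hs : s ≠ 0) (hu : 0 ≤ u)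
    (h : (u * s) ^ 2 = (4 * s ^ 2 - 1) * (1 - s ^ 2)) : u ≤ 1 := by
  have hs2 : 0 < s ^ 2 := by positivity
  have : u ^ 2 * s ^ 2 ≤ 1 * s ^ 2 := by nlinarith [sq_nonneg (2 * s ^ 2 - 1)]
  nlinarith [le_of_mul_le_mul_right this hs2]

theorem two_mul_sub_one_lt_of_sq_mul_eq {s u : ℝ} (hs : 1 / 2 < s) (hs2 : s ^ 2 ≤ 1 / 2)
    (hu : 0 ≤ u) (h : (u * s) ^ 2 = (4 * s ^ 2 - 1) * (1 - s ^ 2)) : 2 * s - 1 < u := by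
  have hcube : 4 * s ^ 3 < 2 * s + 1 := by nlinarith
  have hsq : ((2 * s - 1) * s) ^ 2 < (u * s) ^ 2 := by nlinarith
  exact lt_of_mul_lt_mul_right (lt_of_pow_lt_pow_left₀ 2 (by positivity) hsq) (by linarith)

/-- For `π/3 < A ≤ π/2`, the numbers
`y₁ = (1/2)(1 − √(1 − 2 cos A)/tan(A/2))` and `y₂ = (1/2)(1 + √(1 − 2 cos A)/tan(A/2))`
are exactly the roots of `2(1 − cos A)y² − 2(1 − cos A)y + cos²A = 0`, and they satisfy
`y₁ < sin(A/2) < y₂ ≤ 1`. -/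
theorem stmt6 (A : ℝ) (h1 : π / 3 < A) (h2 : A ≤ π / 2)
    (y₁ y₂ : ℝ)
    (hy₁ : y₁ = (1/2) * (1 - Real.sqrt (1 - 2 * Real.cos A) / Real.tan (A / 2)))
    (hy₂ : y₂ = (1/2) * (1 + Real.sqrt (1 - 2 * Real.cos A) / Real.tan (A / 2))) :
    (∀ y : ℝ,
        2 * (1 - Real.cos A) * y ^ 2 - 2 * (1 - Real.cos A) * y + (Real.cos A) ^ 2 = 0
          ↔ y = y₁ ∨ y = y₂) ∧
      y₁ < Real.sin (A / 2) ∧ Real.sin (A / 2) < y₂ ∧ y₂ ≤ 1 := by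
  set s := sin (A / 2)
  set u := √(1 - 2 * cos A) / tan (A / 2)
  have hcos : cos A = 1 - 2 * s ^ 2 := by
    rw [← cos_two_mul_eq_one_sub, mul_div_cancel₀ _ two_ne_zero]
  have hs : 1 / 2 < s := by
    rw [← sin_pi_div_six]
    exact sin_lt_sin_of_lt_of_le_pi_div_two (by linarith [pi_pos]) (by linarith) (by linarith)
  have hs2 : s ^ 2 ≤ 1 / 2 := by
    linarith [cos_nonneg_of_neg_pi_div_two_le_of_le (by linarith [pi_pos] : -(π / 2) ≤ A) h2]
  have hu : 0 ≤ u :=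
    div_nonneg (sqrt_nonneg _) (tan_nonneg_of_nonneg_of_le_pi_div_two (by linarith [pi_pos])
      (by linarith))
  have hus : (u * s) ^ 2 = (4 * s ^ 2 - 1) * (1 - s ^ 2) := by
    rw [div_tan_mul_sin _ _ (by positivity), mul_pow, sq_sqrt (by nlinarith), cos_sq', hcos]
    ring
  clear_value u
  have hprod : 2 * (1 - cos A) * (y₁ * y₂) = cos A ^ 2 := by
    rw [hy₁, hy₂, hcos]
    linear_combination -hus
  refine ⟨fun y => ?_, ?_, ?_, ?_⟩
  · rw [sub_eq_add_neg, neg_mul_eq_neg_mul]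
    refine quadratic_eq_zero_iff_eq_or_eq ?_ ?_ hprod y
    · nlinarith
    · rw [hy₁, hy₂]; ring
  · rw [hy₁]; linarith
  · rw [hy₂]; linarith [two_mul_sub_one_lt_of_sq_mul_eq hs hs2 hu hus]
  · rw [hy₂]; linarith [le_one_of_sq_mul_eq (by positivity) hu hus]
end

section
/- If γ ≤ α and P = C + ((α − γ)/α) • (B − C) (the point of the segment [C,B] at distance α − γ from C), then dist A P = √( γ·(β + γ − α)·(α + β − γ)/α ). -/
open AffineMap

theorem dist_sq_lineMap {V P : Type*} [NormedAddCommGroup V] [InnerProductSpace ℝ V]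
    [MetricSpace P] [NormedAddTorsor V P] (a b c : P) (t : ℝ) :
    dist a (lineMap c b t) ^ 2 =
      (1 - t) * dist a c ^ 2 + t * dist a b ^ 2 - t * (1 - t) * dist c b ^ 2 := by
  have hab : a -ᵥ b = (a -ᵥ c) - (b -ᵥ c) := (vsub_sub_vsub_cancel_right a b c).symm
  have hap : a -ᵥ lineMap c b t = (a -ᵥ c) - t • (b -ᵥ c) := by
    rw [lineMap_apply, vsub_vadd_eq_vsub_sub]
  rw [dist_eq_norm_vsub V, dist_eq_norm_vsub V, dist_eq_norm_vsub V, dist_eq_norm_vsub' V, hap,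
    hab, norm_sub_sq_real, norm_sub_sq_real, norm_smul, inner_smul_right, mul_pow,
    Real.norm_eq_abs, sq_abs]
  ring

theorem stmt8_general (A B C : EuclideanSpace ℝ (Fin 2)) (α β γ : ℝ)
    (hα : α = dist B C) (hβ : β = dist C A) (hγ : γ = dist A B)
    (hαpos : 0 < α)
    (P : EuclideanSpace ℝ (Fin 2)) (hP : P = C + ((α - γ) / α) • (B - C)) :
    dist A P = Real.sqrt (γ * (β + γ - α) * (α + β - γ) / α) := by
  have hP_lineMap : P = lineMap C B ((α - γ) / α) := by
    rw [hP, lineMap_apply, vsub_eq_sub, vadd_eq_add, add_comm]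
  rw [← Real.sqrt_sq dist_nonneg, hP_lineMap, dist_sq_lineMap, dist_comm A C, dist_comm C B,
    ← hα, ← hβ, ← hγ]
  -- with `1 - t = γ / α` the right side is `(γ / α) * (β ^ 2 - (α - γ) ^ 2)`
  congr 1
  field_simp
  ring

/-- If `γ ≤ α` and `P` is the point of the segment `[C,B]` at distance `α − γ`
from `C`, then `dist A P = √(γ(β + γ − α)(α + β − γ)/α)`. -/
theorem stmt8 (A B C : EuclideanSpace ℝ (Fin 2)) (α β γ : ℝ)
    (hα : α = dist B C) (hβ : β = dist C A) (hγ : γ = dist A B)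
    (hαpos : 0 < α) (hγpos : 0 < γ) (h : γ ≤ α)
    (P : EuclideanSpace ℝ (Fin 2)) (hP : P = C + ((α - γ) / α) • (B - C)) :
    dist A P = Real.sqrt (γ * (β + γ - α) * (α + β - γ) / α) :=
  stmt8_general A B C α β γ hα hβ hγ hαpos P hP
end

section
/- If α ≤ γ and Q = A + ((γ − α)/γ) • (B − A) (the point of the segment [A,B] at distance γ − α from A), then dist C Q = √( α·(β + γ − α)·(α + β − γ)/γ ). -/
/-!
Stewart's theorem in affine-combination form gives, for `Q = A + t • (B - A)`,
`CQ² = (1 - t) CA² + t CB² - t (1 - t) AB²`. With `t = (γ - α)/γ` the right-hand side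
collapses to `(α/γ) (β² - (γ - α)²)`, which factors as the claimed product.
-/

section Stewart

variable {F : Type*} [NormedAddCommGroup F] [InnerProductSpace ℝ F]

theorem norm_sub_smul_sq_eq (x y : F) (t : ℝ) :
    ‖x - t • y‖ ^ 2 = (1 - t) * ‖x‖ ^ 2 + t * ‖x - y‖ ^ 2 - t * (1 - t) * ‖y‖ ^ 2 := by
  rw [norm_sub_sq_real, norm_sub_sq_real, real_inner_smul_right, norm_smul,
    Real.norm_eq_abs, mul_pow, sq_abs]
  ring

theorem dist_add_smul_sub_sq_eq (A B C : F) (t : ℝ) :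
    dist C (A + t • (B - A)) ^ 2 =
      (1 - t) * dist C A ^ 2 + t * dist C B ^ 2 - t * (1 - t) * dist A B ^ 2 := by
  have hCB : C - A - (B - A) = C - B := by abel
  rw [dist_eq_norm, dist_eq_norm, dist_eq_norm, dist_eq_norm', sub_add_eq_sub_sub,
    norm_sub_smul_sq_eq, hCB]

end Stewart

theorem stmt9_general (A B C : EuclideanSpace ℝ (Fin 2)) (α β γ : ℝ)
    (hα : α = dist B C) (hβ : β = dist C A) (hγ : γ = dist A B)
    (hγpos : 0 < γ)
    (Q : EuclideanSpace ℝ (Fin 2)) (hQ : Q = A + ((γ - α) / γ) • (B - A)) :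
    dist C Q = Real.sqrt (α * (β + γ - α) * (α + β - γ) / γ) := by
  have hCQ : dist C Q ^ 2 = α * (β + γ - α) * (α + β - γ) / γ := by
    rw [hQ, dist_add_smul_sub_sq_eq, dist_comm C B, ← hα, ← hβ, ← hγ]
    field_simp
    ring
  rw [← hCQ, Real.sqrt_sq dist_nonneg]

/-- If `α ≤ γ` and `Q` is the point of the segment `[A,B]` at distance `γ − α`
from `A`, then `dist C Q = √(α(β + γ − α)(α + β − γ)/γ)`. -/
theorem stmt9 (A B C : EuclideanSpace ℝ (Fin 2)) (α β γ : ℝ)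
    (hα : α = dist B C) (hβ : β = dist C A) (hγ : γ = dist A B)
    (hαpos : 0 < α) (hγpos : 0 < γ) (h : α ≤ γ)
    (Q : EuclideanSpace ℝ (Fin 2)) (hQ : Q = A + ((γ - α) / γ) • (B - A)) :
    dist C Q = Real.sqrt (α * (β + γ - α) * (α + β - γ) / γ) :=
  stmt9_general A B C α β γ hα hβ hγ hγpos Q hQ
end

section
/- Assume α ≥ β ≥ γ. Then the maximum of T₁ over the interval [γ/2, α/2] equals α/2 + β + γ/2 and is attained at x = γ/2, and the minimum of T₁ over [γ/2, α/2] equals β + γ and is attained at x = α/2. -/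
open Set

noncomputable section

/-- `AR₂(x) = √(β² + (2x − γ)² − 2β(2x − γ)·cos C)`, where
`cos C = (α² + β² − γ²)/(2αβ)` by the Cosine Law. -/
def AR2 (α β γ : ℝ) (x : ℝ) : ℝ :=
  Real.sqrt (β ^ 2 + (2 * x - γ) ^ 2
    - 2 * β * (2 * x - γ) * ((α ^ 2 + β ^ 2 - γ ^ 2) / (2 * α * β)))

/-- `CR₁(x) = √(β² + (γ − 2x)² − 2β(γ − 2x)·cos A)`, where
`cos A = (β² + γ² − α²)/(2βγ)` by the Cosine Law. -/
def CR1 (α β γ : ℝ) (x : ℝ) : ℝ :=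
  Real.sqrt (β ^ 2 + (γ - 2 * x) ^ 2
    - 2 * β * (γ - 2 * x) * ((β ^ 2 + γ ^ 2 - α ^ 2) / (2 * β * γ)))

/-- Worst-case evacuation cost of OppositeSearch in Configuration 1. -/
def T1 (α β γ : ℝ) (x : ℝ) : ℝ :=
  α / 2 + γ - x + max (AR2 α β γ x) (max β (2 * x - γ))

/-- Worst-case evacuation cost of OppositeSearch in Configuration 2. -/
def T2 (α β γ : ℝ) (x : ℝ) : ℝ :=
  α / 2 + x + max (CR1 α β γ x) (max β (γ - 2 * x))

/-!
With `t = 2x − γ ∈ [0, α − γ]` the first term of `T₁` is `α/2 + γ/2 − t/2`, and the law of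
cosines gives `AR₂² = β² + t² − t·(α² + β² − γ²)/α`. Since `γ ≤ β`, the slope
`(α² + β² − γ²)/α` is at least `α ≥ t`, so `AR₂ ≤ β + t/2`; hence `T₁ ≤ α/2 + β + γ/2`, with
equality at `t = 0`. The lower bound `β + γ` is just `max ≥ β` together with `x ≤ α/2`; at
`x = α/2` both `AR₂` and `2x − γ = α − γ` are at most `β` (the latter by the triangle
inequality), so it is attained there.
-/

lemma AR2_eq_sqrt {α β : ℝ} (γ x : ℝ) (hα : α ≠ 0) (hβ : β ≠ 0) :
    AR2 α β γ x =
      √(β ^ 2 + (2 * x - γ) ^ 2 - (2 * x - γ) * (α ^ 2 + β ^ 2 - γ ^ 2) / α) := by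
  unfold AR2
  congr 2
  field_simp

lemma AR2_half_gamma (α : ℝ) {β : ℝ} (γ : ℝ) (hβ : 0 ≤ β) : AR2 α β γ (γ / 2) = β := by
  simp [AR2, Real.sqrt_sq hβ, mul_div_cancel₀]

lemma AR2_le_add {α β γ x : ℝ} (hα : 0 < α) (hβ : 0 < β) (hγβ : γ ^ 2 ≤ β ^ 2)
    (hx₀ : γ ≤ 2 * x) (hx₁ : 2 * x ≤ γ + α) :
    AR2 α β γ x ≤ β + (x - γ / 2) := by
  rw [AR2_eq_sqrt γ x hα.ne' hβ.ne', Real.sqrt_le_left (by linarith), sub_le_iff_le_add,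
    ← sub_le_iff_le_add', le_div_iff₀ hα]
  have ht : 0 ≤ 2 * x - γ := by linarith
  nlinarith [mul_nonneg ht (sub_nonneg.2 hx₁), mul_nonneg ht hβ.le,
    mul_nonneg ht (sub_nonneg.2 hγβ), mul_nonneg ht ht]

lemma AR2_half_alpha_le {α β γ : ℝ} (hα : 0 < α) (hβ : 0 < β) (hγ : 0 ≤ γ) (hγα : γ ≤ α) :
    AR2 α β γ (α / 2) ≤ β := by
  rw [AR2_eq_sqrt γ _ hα.ne' hβ.ne', Real.sqrt_le_left hβ.le, sub_le_iff_le_add,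
    ← sub_le_iff_le_add', le_div_iff₀ hα]
  nlinarith [mul_nonneg hγ (sub_nonneg.2 hγα), mul_nonneg (sq_nonneg β) (sub_nonneg.2 hγα)]

lemma T1_half_gamma (α : ℝ) {β : ℝ} (γ : ℝ) (hβ : 0 ≤ β) :
    T1 α β γ (γ / 2) = α / 2 + β + γ / 2 := by
  rw [T1, AR2_half_gamma α γ hβ, mul_div_cancel₀ γ two_ne_zero, sub_self, max_eq_left hβ,
    max_self]
  ring

lemma T1_half_alpha {α β γ : ℝ} (hα : 0 < α) (hβ : 0 < β) (hγ : 0 ≤ γ) (hγα : γ ≤ α)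
    (hαβγ : α ≤ β + γ) : T1 α β γ (α / 2) = β + γ := by
  rw [T1, max_eq_left (by linarith : 2 * (α / 2) - γ ≤ β),
    max_eq_right (AR2_half_alpha_le hα hβ hγ hγα)]
  ring

lemma le_T1 (α β γ : ℝ) {x : ℝ} (hx : x ≤ α / 2) : β + γ ≤ T1 α β γ x := by
  have : β ≤ max (AR2 α β γ x) (max β (2 * x - γ)) := le_max_of_le_right (le_max_left _ _)
  unfold T1
  linarith

lemma T1_le {α β γ x : ℝ} (hα : 0 < α) (hβ : 0 < β) (hγ : 0 ≤ γ) (hγβ : γ ≤ β)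
    (hαβγ : α ≤ β + γ) (hx : x ∈ Icc (γ / 2) (α / 2)) : T1 α β γ x ≤ α / 2 + β + γ / 2 := by
  obtain ⟨hx₀, hx₁⟩ := hx
  have : max (AR2 α β γ x) (max β (2 * x - γ)) ≤ β + (x - γ / 2) :=
    max_le (AR2_le_add hα hβ (pow_le_pow_left₀ hγ hγβ 2) (by linarith) (by linarith))
      (max_le (by linarith) (by linarith))
  unfold T1
  linarith

theorem stmt10_general (α β γ : ℝ) (hα : 0 < α) (hβ : 0 < β) (hγ : 0 < γ)
    (h1 : α < β + γ)
    (hαβ : β ≤ α) (hβγ : γ ≤ β) :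
    IsGreatest (T1 α β γ '' Icc (γ / 2) (α / 2)) (α / 2 + β + γ / 2) ∧
      T1 α β γ (γ / 2) = α / 2 + β + γ / 2 ∧
      IsLeast (T1 α β γ '' Icc (γ / 2) (α / 2)) (β + γ) ∧
      T1 α β γ (α / 2) = β + γ := by
  have hγα : γ ≤ α := hβγ.trans hαβ
  have hmax := T1_half_gamma α γ hβ.le
  have hmin := T1_half_alpha hα hβ hγ.le hγα h1.le
  refine ⟨⟨⟨γ / 2, ⟨le_rfl, by linarith⟩, hmax⟩, ?_⟩, hmax,
    ⟨⟨α / 2, ⟨by linarith, le_rfl⟩, hmin⟩, ?_⟩, hmin⟩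
  · rintro _ ⟨x, hx, rfl⟩
    exact T1_le hα hβ hγ.le hβγ h1.le hx
  · rintro _ ⟨x, hx, rfl⟩
    exact le_T1 α β γ hx.2

/-- Case `α ≥ β ≥ γ`, Configuration 1: the maximum of `T₁` over `[γ/2, α/2]` is
`α/2 + β + γ/2`, attained at `x = γ/2`, and the minimum is `β + γ`, attained at
`x = α/2`. -/
theorem stmt10 (α β γ : ℝ) (hα : 0 < α) (hβ : 0 < β) (hγ : 0 < γ)
    (h1 : α < β + γ) (h2 : β < α + γ) (h3 : γ < α + β)
    (h4 : α ^ 2 ≤ β ^ 2 + γ ^ 2) (h5 : β ^ 2 ≤ α ^ 2 + γ ^ 2)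
    (h6 : γ ^ 2 ≤ α ^ 2 + β ^ 2)
    (hαβ : β ≤ α) (hβγ : γ ≤ β) :
    IsGreatest (T1 α β γ '' Icc (γ / 2) (α / 2)) (α / 2 + β + γ / 2) ∧
      T1 α β γ (γ / 2) = α / 2 + β + γ / 2 ∧
      IsLeast (T1 α β γ '' Icc (γ / 2) (α / 2)) (β + γ) ∧
      T1 α β γ (α / 2) = β + γ :=
  stmt10_general α β γ hα hβ hγ h1 hαβ hβγ
end
end

section
/- Assume α ≥ β ≥ γ. Then the maximum of T₂ over the interval [0, γ/2] equals α/2 + max{α, β + γ/2}; it is attained at x = 0 when α ≥ β + γ/2 and at x = γ/2 when α ≤ β + γ/2. -/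
open Set

noncomputable section

/-!
By Stewart's theorem, `γ · CR₁(x)² = (γ - 2x) α² + 2x β² - 2x γ (γ - 2x)`. Put
`M = max {α, β + γ/2}`. Bounding `α² ≤ M²` and `β² ≤ (M - γ/2)²` in this convex combination
leaves `γ ((M - x)² - CR₁(x)²) ≥ (3/2) x γ (γ - 2x) ≥ 0` on `[0, γ/2]`, so `x + CR₁(x) ≤ M`.
The other two terms of the maximum in `T₂` are bounded by `M - x` directly, hence `T₂ ≤ α/2 + M`,
and the endpoints give `T₂(0) = α/2 + α` and `T₂(γ/2) = α/2 + β + γ/2`.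
-/

lemma CR1_eq_sqrt_stewart (α β γ x : ℝ) (hβ : β ≠ 0) (hγ : γ ≠ 0) :
    CR1 α β γ x = √(((γ - 2 * x) * α ^ 2 + 2 * x * β ^ 2) / γ - 2 * x * (γ - 2 * x)) := by
  unfold CR1
  congr 1
  field_simp
  ring

lemma CR1_le_sub {α β γ M x : ℝ} (hα : 0 ≤ α) (hβ : 0 < β) (hγ : 0 < γ)
    (hαM : α ≤ M) (hβM : β + γ / 2 ≤ M) (hx₀ : 0 ≤ x) (hx₁ : x ≤ γ / 2) :
    CR1 α β γ x ≤ M - x := by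
  rw [CR1_eq_sqrt_stewart α β γ x hβ.ne' hγ.ne']
  have hα_sq : α ^ 2 ≤ M ^ 2 := pow_le_pow_left₀ hα hαM 2
  have hβ_sq : β ^ 2 ≤ (M - γ / 2) ^ 2 := pow_le_pow_left₀ hβ.le (by linarith) 2
  have hconvex : (γ - 2 * x) * α ^ 2 + 2 * x * β ^ 2
      ≤ (γ - 2 * x) * M ^ 2 + 2 * x * (M - γ / 2) ^ 2 := by
    gcongr; linarith
  have hgap : 0 ≤ x * γ * (γ - 2 * x) := mul_nonneg (mul_nonneg hx₀ hγ.le) (by linarith)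
  have hgap_eq : (γ - 2 * x) * M ^ 2 + 2 * x * (M - γ / 2) ^ 2 + 3 / 2 * (x * γ * (γ - 2 * x))
      = ((M - x) ^ 2 + 2 * x * (γ - 2 * x)) * γ := by ring
  refine Real.sqrt_le_iff.mpr ⟨by linarith, ?_⟩
  rw [sub_le_iff_le_add, div_le_iff₀ hγ]
  linarith

lemma CR1_zero (α β γ : ℝ) (hα : 0 ≤ α) (hβ : β ≠ 0) (hγ : γ ≠ 0) : CR1 α β γ 0 = α := by
  rw [CR1_eq_sqrt_stewart α β γ 0 hβ hγ]
  convert Real.sqrt_sq hα using 2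
  field_simp
  ring

lemma CR1_half (α β γ : ℝ) (hβ : 0 ≤ β) : CR1 α β γ (γ / 2) = β := by
  unfold CR1
  convert Real.sqrt_sq hβ using 2
  ring

lemma T2_le {α β γ x : ℝ} (hα : 0 ≤ α) (hβ : 0 < β) (hγ : 0 < γ) (hγβ : γ ≤ 2 * β)
    (hx : x ∈ Icc 0 (γ / 2)) :
    T2 α β γ x ≤ α / 2 + max α (β + γ / 2) := by
  obtain ⟨hx₀, hx₁⟩ := hx
  have hαM : α ≤ max α (β + γ / 2) := le_max_left _ _
  have hβM : β + γ / 2 ≤ max α (β + γ / 2) := le_max_right _ _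
  have hCR1 := CR1_le_sub hα hβ hγ hαM hβM hx₀ hx₁
  have : max (CR1 α β γ x) (max β (γ - 2 * x)) ≤ max α (β + γ / 2) - x :=
    max_le hCR1 (max_le (by linarith) (by linarith))
  unfold T2
  linarith

lemma T2_zero {α β γ : ℝ} (hα : 0 ≤ α) (hβ : 0 < β) (hγ : 0 < γ) (hγβ : γ ≤ β) (hβα : β ≤ α) :
    T2 α β γ 0 = α / 2 + α := by
  unfold T2
  rw [CR1_zero α β γ hα hβ.ne' hγ.ne', mul_zero, sub_zero, max_eq_left hγβ, max_eq_left hβα,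
    add_zero]

lemma T2_half (α β γ : ℝ) (hβ : 0 ≤ β) : T2 α β γ (γ / 2) = α / 2 + (β + γ / 2) := by
  unfold T2
  rw [CR1_half α β γ hβ, mul_div_cancel₀ γ two_ne_zero, sub_self, max_eq_left hβ, max_self]
  ring

theorem stmt11_general (α β γ : ℝ) (hα : 0 < α) (hβ : 0 < β) (hγ : 0 < γ)
    (hαβ : β ≤ α) (hβγ : γ ≤ β) :
    IsGreatest (T2 α β γ '' Icc 0 (γ / 2)) (α / 2 + max α (β + γ / 2)) ∧
      (β + γ / 2 ≤ α → T2 α β γ 0 = α / 2 + max α (β + γ / 2)) ∧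
      (α ≤ β + γ / 2 → T2 α β γ (γ / 2) = α / 2 + max α (β + γ / 2)) := by
  have at_zero (h : β + γ / 2 ≤ α) : T2 α β γ 0 = α / 2 + max α (β + γ / 2) := by
    rw [T2_zero hα.le hβ hγ hβγ hαβ, max_eq_left h]
  have at_half (h : α ≤ β + γ / 2) : T2 α β γ (γ / 2) = α / 2 + max α (β + γ / 2) := by
    rw [T2_half α β γ hβ.le, max_eq_right h]
  refine ⟨⟨?_, ?_⟩, at_zero, at_half⟩
  · rcases le_total (β + γ / 2) α with h | h
    · exact ⟨0, ⟨le_rfl, by linarith⟩, at_zero h⟩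
    · exact ⟨γ / 2, ⟨by linarith, le_rfl⟩, at_half h⟩
  · rintro _ ⟨x, hx, rfl⟩
    exact T2_le hα.le hβ hγ (by linarith) hx

/-- Case `α ≥ β ≥ γ`, Configuration 2: the maximum of `T₂` over `[0, γ/2]` is
`α/2 + max {α, β + γ/2}`, attained at `x = 0` when `α ≥ β + γ/2` and at
`x = γ/2` when `α ≤ β + γ/2`. -/
theorem stmt11 (α β γ : ℝ) (hα : 0 < α) (hβ : 0 < β) (hγ : 0 < γ)
    (h1 : α < β + γ) (h2 : β < α + γ) (h3 : γ < α + β)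
    (h4 : α ^ 2 ≤ β ^ 2 + γ ^ 2) (h5 : β ^ 2 ≤ α ^ 2 + γ ^ 2)
    (h6 : γ ^ 2 ≤ α ^ 2 + β ^ 2)
    (hαβ : β ≤ α) (hβγ : γ ≤ β) :
    IsGreatest (T2 α β γ '' Icc 0 (γ / 2)) (α / 2 + max α (β + γ / 2)) ∧
      (β + γ / 2 ≤ α → T2 α β γ 0 = α / 2 + max α (β + γ / 2)) ∧
      (α ≤ β + γ / 2 → T2 α β γ (γ / 2) = α / 2 + max α (β + γ / 2)) :=
  stmt11_general α β γ hα hβ hγ hαβ hβγ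
end
end

section
/- Assume α ≥ γ ≥ β. Then the maximum of T₁ over the interval [γ/2, α/2] equals α/2 + β + γ/2 and is attained at x = γ/2, and the minimum of T₁ over [γ/2, α/2] equals β + γ and is attained at x = α/2. -/
open Set

noncomputable section

/-!
On `[γ/2, α/2]` put `u = 2x − γ ∈ [0, α − γ]`. Since `AR₂² = β² + u² − 2βu cos C`, we have
`AR₂ ≤ β` as long as `u ≤ 2β cos C = (α² + β² − γ²)/α`, which holds because
`αu ≤ α(α − γ) ≤ α² − γ²`; and `u ≤ α − γ < β` by the triangle inequality. So the maximum in
`T₁` is the constant `β`, and `T₁(x) = α/2 + γ − x + β` is decreasing on the interval: its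
extremes sit at the endpoints.
-/

theorem AR2_le_of_mul_le {α β γ x : ℝ} (hα : 0 < α) (hβ : 0 < β) (hu : 0 ≤ 2 * x - γ)
    (hu' : α * (2 * x - γ) ≤ α ^ 2 + β ^ 2 - γ ^ 2) :
    AR2 α β γ x ≤ β := by
  have hcos : 2 * β * (2 * x - γ) * ((α ^ 2 + β ^ 2 - γ ^ 2) / (2 * α * β))
      = (2 * x - γ) * (α ^ 2 + β ^ 2 - γ ^ 2) / α := by
    field_simp
  have hsq : (2 * x - γ) ^ 2 ≤ (2 * x - γ) * (α ^ 2 + β ^ 2 - γ ^ 2) / α := by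
    rw [le_div_iff₀ hα]
    nlinarith [mul_le_mul_of_nonneg_left hu' hu]
  rw [AR2, hcos, Real.sqrt_le_iff]
  exact ⟨hβ.le, by linarith⟩

theorem T1_eq_of_mem_Icc {α β γ x : ℝ} (hα : 0 < α) (hβ : 0 < β) (hγ : 0 < γ)
    (hαβγ : α < β + γ) (hx : x ∈ Icc (γ / 2) (α / 2)) :
    T1 α β γ x = α / 2 + γ - x + β := by
  obtain ⟨hx₁, hx₂⟩ := hx
  have hAR : AR2 α β γ x ≤ β := by
    refine AR2_le_of_mul_le hα hβ (by linarith) ?_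
    nlinarith [mul_le_mul_of_nonneg_left (show γ ≤ α by linarith) hγ.le]
  rw [T1, max_eq_left (show 2 * x - γ ≤ β by linarith), max_eq_right hAR]

theorem T1_antitoneOn_Icc {α β γ : ℝ} (hα : 0 < α) (hβ : 0 < β) (hγ : 0 < γ)
    (hαβγ : α < β + γ) : AntitoneOn (T1 α β γ) (Icc (γ / 2) (α / 2)) := by
  intro x hx y hy hxy
  rw [T1_eq_of_mem_Icc hα hβ hγ hαβγ hx, T1_eq_of_mem_Icc hα hβ hγ hαβγ hy]
  linarith

theorem stmt12_general (α β γ : ℝ) (hα : 0 < α) (hβ : 0 < β) (hγ : 0 < γ)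
    (h1 : α < β + γ)
    (hαγ : γ ≤ α) :
    IsGreatest (T1 α β γ '' Icc (γ / 2) (α / 2)) (α / 2 + β + γ / 2) ∧
      T1 α β γ (γ / 2) = α / 2 + β + γ / 2 ∧
      IsLeast (T1 α β γ '' Icc (γ / 2) (α / 2)) (β + γ) ∧
      T1 α β γ (α / 2) = β + γ := by
  have hle : γ / 2 ≤ α / 2 := by linarith
  have hleft : T1 α β γ (γ / 2) = α / 2 + β + γ / 2 := by
    rw [T1_eq_of_mem_Icc hα hβ hγ h1 (left_mem_Icc.mpr hle)]; ring
  have hright : T1 α β γ (α / 2) = β + γ := by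
    rw [T1_eq_of_mem_Icc hα hβ hγ h1 (right_mem_Icc.mpr hle)]; ring
  have hanti := T1_antitoneOn_Icc hα hβ hγ h1
  exact ⟨hleft ▸ hanti.map_isLeast (isLeast_Icc hle), hleft,
    hright ▸ hanti.map_isGreatest (isGreatest_Icc hle), hright⟩

/-- Case `α ≥ γ ≥ β`, Configuration 1: the maximum of `T₁` over `[γ/2, α/2]` is
`α/2 + β + γ/2`, attained at `x = γ/2`, and the minimum is `β + γ`, attained at
`x = α/2`. -/
theorem stmt12 (α β γ : ℝ) (hα : 0 < α) (hβ : 0 < β) (hγ : 0 < γ)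
    (h1 : α < β + γ) (h2 : β < α + γ) (h3 : γ < α + β)
    (h4 : α ^ 2 ≤ β ^ 2 + γ ^ 2) (h5 : β ^ 2 ≤ α ^ 2 + γ ^ 2)
    (h6 : γ ^ 2 ≤ α ^ 2 + β ^ 2)
    (hαγ : γ ≤ α) (hγβ : β ≤ γ) :
    IsGreatest (T1 α β γ '' Icc (γ / 2) (α / 2)) (α / 2 + β + γ / 2) ∧
      T1 α β γ (γ / 2) = α / 2 + β + γ / 2 ∧
      IsLeast (T1 α β γ '' Icc (γ / 2) (α / 2)) (β + γ) ∧
      T1 α β γ (α / 2) = β + γ :=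
  stmt12_general α β γ hα hβ hγ h1 hαγ
end
end

section
/- Assume β ≥ α ≥ γ. Then the maximum of T₂ over the interval [0, γ/2] equals α/2 + β + γ/2 and is attained at x = γ/2, and the minimum of T₂ over [0, γ/2] equals α/2 + β and is attained at x = 0. -/
open Set

noncomputable section

/-- Case `β ≥ α ≥ γ`, Configuration 2: the maximum of `T₂` over `[0, γ/2]` is
`α/2 + β + γ/2`, attained at `x = γ/2`, and the minimum is `α/2 + β`,
attained at `x = 0`. -/
theorem stmt14 (α β γ : ℝ) (hα : 0 < α) (hβ : 0 < β) (hγ : 0 < γ)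
    (h1 : α < β + γ) (h2 : β < α + γ) (h3 : γ < α + β)
    (h4 : α ^ 2 ≤ β ^ 2 + γ ^ 2) (h5 : β ^ 2 ≤ α ^ 2 + γ ^ 2)
    (h6 : γ ^ 2 ≤ α ^ 2 + β ^ 2)
    (hβα : α ≤ β) (hαγ : γ ≤ α) :
    IsGreatest (T2 α β γ '' Icc 0 (γ / 2)) (α / 2 + β + γ / 2) ∧
      T2 α β γ (γ / 2) = α / 2 + β + γ / 2 ∧
      IsLeast (T2 α β γ '' Icc 0 (γ / 2)) (α / 2 + β) ∧
      T2 α β γ 0 = α / 2 + β := by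
  have keyeq : ∀ x ∈ Icc (0:ℝ) (γ/2), T2 α β γ x = α/2 + x + β := by
    intro x hx
    obtain ⟨hx0, hx1⟩ := hx
    have ht0 : 0 ≤ γ - 2*x := by linarith
    have htγ : γ - 2*x ≤ γ := by linarith
    have hβ2 : α^2 ≤ β^2 := by nlinarith
    have hcr : CR1 α β γ x ≤ β := by
      rw [CR1]
      have hc : 2*β*γ*((β ^ 2 + γ ^ 2 - α ^ 2) / (2 * β * γ)) = β^2+γ^2-α^2 := by
        field_simp
      have harg : β ^ 2 + (γ - 2 * x) ^ 2
          - 2 * β * (γ - 2 * x) * ((β ^ 2 + γ ^ 2 - α ^ 2) / (2 * β * γ)) ≤ β^2 := by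
        nlinarith [mul_nonneg ht0 (sub_nonneg.2 htγ), mul_nonneg ht0 ht0,
          mul_pos hβ hγ, mul_nonneg ht0 (sub_nonneg.2 hβ2)]
      calc Real.sqrt _ ≤ Real.sqrt (β^2) := Real.sqrt_le_sqrt harg
        _ = β := Real.sqrt_sq hβ.le
    have hmax : max (CR1 α β γ x) (max β (γ - 2*x)) = β := by
      rw [max_eq_left (by linarith : γ - 2*x ≤ β), max_eq_right hcr]
    rw [T2, hmax]
  have hγ2 : (γ/2 : ℝ) ∈ Icc (0:ℝ) (γ/2) := ⟨by linarith, le_refl _⟩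
  have h0 : (0:ℝ) ∈ Icc (0:ℝ) (γ/2) := ⟨le_refl _, by linarith⟩
  have e1 : T2 α β γ (γ/2) = α/2 + β + γ/2 := by rw [keyeq _ hγ2]; ring
  have e0 : T2 α β γ 0 = α/2 + β := by rw [keyeq _ h0]; ring
  refine ⟨⟨⟨γ/2, hγ2, e1⟩, ?_⟩, e1, ⟨⟨0, h0, e0⟩, ?_⟩, e0⟩
  · rintro y ⟨x, hx, rfl⟩
    rw [keyeq _ hx]; linarith [hx.2]
  · rintro y ⟨x, hx, rfl⟩
    rw [keyeq _ hx]; linarith [hx.1]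
end
end

section
/- Assume β ≥ γ ≥ α. Then the maximum of T₂ over the interval [0, α/2] equals α + β and is attained at x = α/2, and the minimum of T₂ over [0, α/2] equals α/2 + β and is attained at x = 0. -/
open Set

noncomputable section

/-! On `[0, α/2]` both `CR₁(x)` and `γ − 2x` are at most `β`, so `T₂(x) = α/2 + x + β` there:
an increasing affine function, which is largest at `x = α/2` and smallest at `x = 0`.
The bound on `CR₁` is the law of cosines: the side opposite an angle with cosine `c`,
between sides `b` and `t`, is at most `b` as long as `0 ≤ t ≤ 2bc`. -/

theorem Real.sqrt_law_of_cosines_le {b t c : ℝ} (hb : 0 ≤ b) (ht : 0 ≤ t)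
    (htc : t ≤ 2 * b * c) : √(b ^ 2 + t ^ 2 - 2 * b * t * c) ≤ b := by
  rw [Real.sqrt_le_left hb]
  nlinarith [mul_nonpos_of_nonneg_of_nonpos ht (sub_nonpos.2 htc)]

theorem CR1_le {α β γ x : ℝ} (hβ : 0 < β) (hγ : 0 < γ) (hαβ : α ^ 2 ≤ β ^ 2)
    (hx : 0 ≤ x) (hxγ : 2 * x ≤ γ) : CR1 α β γ x ≤ β := by
  refine Real.sqrt_law_of_cosines_le hβ.le (by linarith) ?_
  rw [show 2 * β * ((β ^ 2 + γ ^ 2 - α ^ 2) / (2 * β * γ)) = (β ^ 2 + γ ^ 2 - α ^ 2) / γ by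
    field_simp, le_div_iff₀ hγ]
  nlinarith

theorem T2_eq_of_mem_Icc {α β γ x : ℝ} (hβ : 0 < β) (hγ : 0 < γ) (hβγ : γ ≤ β)
    (hγα : α ≤ γ) (hx : x ∈ Icc 0 (α / 2)) : T2 α β γ x = α / 2 + x + β := by
  obtain ⟨hx0, hxα⟩ := hx
  have hαβ : α ^ 2 ≤ β ^ 2 := pow_le_pow_left₀ (by linarith) (hγα.trans hβγ) 2
  rw [T2, max_eq_left (by linarith : γ - 2 * x ≤ β),
    max_eq_right (CR1_le hβ hγ hαβ hx0 (by linarith))]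

theorem stmt15_general (α β γ : ℝ) (hα : 0 < α) (hβ : 0 < β) (hγ : 0 < γ)
    (hβγ : γ ≤ β) (hγα : α ≤ γ) :
    IsGreatest (T2 α β γ '' Icc 0 (α / 2)) (α + β) ∧
      T2 α β γ (α / 2) = α + β ∧
      IsLeast (T2 α β γ '' Icc 0 (α / 2)) (α / 2 + β) ∧
      T2 α β γ 0 = α / 2 + β := by
  have hT2 := fun x => T2_eq_of_mem_Icc (α := α) (x := x) hβ hγ hβγ hγα
  have hmono : MonotoneOn (T2 α β γ) (Icc 0 (α / 2)) := fun x hx y hy hxy => by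
    rw [hT2 x hx, hT2 y hy]; linarith
  have hle : (0 : ℝ) ≤ α / 2 := by positivity
  have hright : T2 α β γ (α / 2) = α + β := by
    rw [hT2 _ (right_mem_Icc.2 hle)]; ring
  have hleft : T2 α β γ 0 = α / 2 + β := by
    rw [hT2 _ (left_mem_Icc.2 hle)]; ring
  refine ⟨?_, hright, ?_, hleft⟩
  · simpa [hright] using hmono.map_isGreatest (isGreatest_Icc hle)
  · simpa [hleft] using hmono.map_isLeast (isLeast_Icc hle)

/-- Case `β ≥ γ ≥ α`, Configuration 2: the maximum of `T₂` over `[0, α/2]` is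
`α + β`, attained at `x = α/2`, and the minimum is `α/2 + β`, attained at
`x = 0`. -/
theorem stmt15 (α β γ : ℝ) (hα : 0 < α) (hβ : 0 < β) (hγ : 0 < γ)
    (h1 : α < β + γ) (h2 : β < α + γ) (h3 : γ < α + β)
    (h4 : α ^ 2 ≤ β ^ 2 + γ ^ 2) (h5 : β ^ 2 ≤ α ^ 2 + γ ^ 2)
    (h6 : γ ^ 2 ≤ α ^ 2 + β ^ 2)
    (hβγ : γ ≤ β) (hγα : α ≤ γ) :
    IsGreatest (T2 α β γ '' Icc 0 (α / 2)) (α + β) ∧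
      T2 α β γ (α / 2) = α + β ∧
      IsLeast (T2 α β γ '' Icc 0 (α / 2)) (α / 2 + β) ∧
      T2 α β γ 0 = α / 2 + β :=
  stmt15_general α β γ hα hβ hγ hβγ hγα
end
end

section
/- Assume γ ≥ α, γ ≥ β, and cosA ≥ 1/2 (i.e. the angle opposite the side of length α is at most π/3). Then for every x with 0 ≤ x ≤ α/2, one has α/2 + x + CR₁(x) ≤ max{ α/2 + β + x, α/2 + γ − x }. -/
open Set

noncomputable section

/-- If `γ` is a largest side and the angle opposite `α` is at most `π/3`
(i.e. `cos A ≥ 1/2`), then `α/2 + x + CR₁(x) ≤ max {α/2 + β + x, α/2 + γ − x}`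
for every `x ∈ [0, α/2]`. -/
theorem stmt16 (α β γ : ℝ) (hα : 0 < α) (hβ : 0 < β) (hγ : 0 < γ)
    (h1 : α < β + γ) (h2 : β < α + γ) (h3 : γ < α + β)
    (h4 : α ^ 2 ≤ β ^ 2 + γ ^ 2) (h5 : β ^ 2 ≤ α ^ 2 + γ ^ 2)
    (h6 : γ ^ 2 ≤ α ^ 2 + β ^ 2)
    (hγα : α ≤ γ) (hγβ : β ≤ γ)
    (hcosA : 1 / 2 ≤ (β ^ 2 + γ ^ 2 - α ^ 2) / (2 * β * γ)) :
    ∀ x : ℝ, 0 ≤ x → x ≤ α / 2 →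
      α / 2 + x + CR1 α β γ x ≤ max (α / 2 + β + x) (α / 2 + γ - x) := by
  intro x hx0 hx
  set t := γ - 2 * x with ht
  have htnn : 0 ≤ t := by simp only [ht]; nlinarith
  set c := (β ^ 2 + γ ^ 2 - α ^ 2) / (2 * β * γ) with hc
  have hM : CR1 α β γ x ≤ max β t := by
    have hE : β ^ 2 + t ^ 2 - 2 * β * t * c ≤ (max β t) ^ 2 := by
      have h1 : β * t ≤ 2 * β * t * c := by nlinarith [mul_nonneg hβ.le htnn]
      rcases le_total β t with h | h
      · have : max β t = t := max_eq_right h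
        rw [this]; nlinarith
      · have : max β t = β := max_eq_left h
        rw [this]; nlinarith
    calc CR1 α β γ x ≤ Real.sqrt ((max β t) ^ 2) := Real.sqrt_le_sqrt hE
      _ = max β t := Real.sqrt_sq (le_trans hβ.le (le_max_left _ _))
  rcases le_total β t with h | h
  · have : CR1 α β γ x ≤ t := le_trans hM (by simp [max_eq_right h])
    refine le_max_of_le_right ?_
    simp only [ht] at this; linarith
  · have : CR1 α β γ x ≤ β := le_trans hM (by simp [max_eq_left h])
    refine le_max_of_le_left ?_
    linarith
end
end

section
/- Let a ≥ b ≥ c > 0 with a ≤ b + c (so a, b, c are the side lengths of a triangle whose largest side is a), and let τ = (1/4)·√((a+b+c)·(−a+b+c)·(a−b+c)·(a+b−c)) be the area of that triangle. Then ((a + b)² − c² + 4·√3·τ)/(4·b) ≥ (a + b + c)/2. -/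
/-- For side lengths `a ≥ b ≥ c > 0` of a triangle with largest side `a`
and Heron area `τ`, one has `((a + b)² − c² + 4√3·τ)/(4b) ≥ (a + b + c)/2`. -/
theorem stmt19 (a b c : ℝ) (hc : 0 < c) (hcb : c ≤ b) (hba : b ≤ a)
    (htri : a ≤ b + c)
    (τ : ℝ)
    (hτ : τ = (1/4) * Real.sqrt ((a + b + c) * (-a + b + c) * (a - b + c) * (a + b - c))) :
    (a + b + c) / 2 ≤ ((a + b) ^ 2 - c ^ 2 + 4 * Real.sqrt 3 * τ) / (4 * b) := by
  have hP : (a + b + c) * (-a + b + c) * (a - b + c) * (a + b - c) =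
      (a + b + c) * (-a + b + c) * (a - b + c) * (a + b - c) := rfl
  set P := (a + b + c) * (-a + b + c) * (a - b + c) * (a + b - c) with hPdef
  have h1 : 0 ≤ (a + b + c) * (b + c - a) := by nlinarith
  have h2 : 0 ≤ a ^ 2 - b ^ 2 - c ^ 2 + b * c := by nlinarith
  have hkey : ((a + b + c) * (b + c - a)) ^ 2 ≤ 3 * P := by
    rw [hPdef]; nlinarith [mul_nonneg h1 h2]
  have hsq : (a + b + c) * (b + c - a) ≤ Real.sqrt (3 * P) := by
    calc (a + b + c) * (b + c - a) = Real.sqrt (((a + b + c) * (b + c - a)) ^ 2) :=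
          (Real.sqrt_sq h1).symm
      _ ≤ Real.sqrt (3 * P) := Real.sqrt_le_sqrt hkey
  have h3 : Real.sqrt (3 * P) = Real.sqrt 3 * Real.sqrt P :=
    Real.sqrt_mul (by norm_num) P
  rw [div_le_div_iff₀ (by norm_num) (by linarith), hτ]
  nlinarith [hsq, h3, Real.sqrt_nonneg P, Real.sqrt_nonneg 3]
end
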